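/- arXiv:1502.03029 — 3 statements merged into one kernel-verified Lean document; each statement's English description precedes it below -/
import Mathlib

section
/- For n ≥ 7, the number of 4-element subsets of Z/nZ with exactly three cyclic components (necessarily one interval of length 2 and two singletons, pairwise non-adjacent) is n(n-5)(n-6)/2. -/
/-!
A 4-element set with three cyclic components is a block `{a, a + 1}` together with two isolated
points. Measuring offsets from `a` as naturals below `n`, it becomes `{0, 1, u, v}` with
`3 ≤ u`, `u + 2 ≤ v ≤ n - 2`; since `a - 1` is not in the set there is no wrap-around, so its
cyclic components are the runs of `{0, 1, u, v}` in `ℕ`. The representation is unique, `a + 1`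
being the only element whose predecessor also lies in the set. The count is therefore `n` times
the number of admissible pairs `(u, v)`, which is `(n - 5)(n - 6) / 2`.
-/

/-- The number of maximal cyclic intervals (connected components) of a subset
`S` of `ZMod n`: the full set is one single component; otherwise the components
are counted by their left endpoints, i.e. elements `i ∈ S` with `i - 1 ∉ S`. -/
def cyclicComponents (n : ℕ) [NeZero n] (S : Finset (ZMod n)) : ℕ :=
  if S = Finset.univ then 1 else (S.filter fun i => i - 1 ∉ S).card

open Finset

section OffsetSet

variable {n : ℕ}

lemma add_natCast_val_sub [NeZero n] (a x : ZMod n) : a + ((x - a).val : ZMod n) = x := by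
  rw [ZMod.natCast_zmod_val, add_sub_cancel]

lemma add_natCast_eq_iff [NeZero n] {a x : ZMod n} {k : ℕ} (hk : k < n) :
    a + (k : ZMod n) = x ↔ (x - a).val = k := by
  constructor
  · rintro rfl
    rw [add_sub_cancel_left, ZMod.val_cast_of_lt hk]
  · rintro rfl
    exact add_natCast_val_sub a x

lemma val_sub_one_sub_self [NeZero n] (a : ZMod n) : (a - 1 - a).val = n - 1 := by
  obtain ⟨m, rfl⟩ : ∃ m, n = m + 1 := Nat.exists_eq_succ_of_ne_zero (NeZero.ne n)
  rw [sub_sub_cancel_left, ZMod.val_neg_one, Nat.add_sub_cancel]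

def offsetSet (a : ZMod n) (T : Finset ℕ) : Finset (ZMod n) :=
  T.image fun k : ℕ => a + (k : ZMod n)

variable {a : ZMod n} {T : Finset ℕ}

lemma mem_offsetSet [NeZero n] {x : ZMod n} (hT : ∀ k ∈ T, k < n) :
    x ∈ offsetSet a T ↔ (x - a).val ∈ T := by
  simp only [offsetSet, mem_image]
  constructor
  · rintro ⟨k, hk, rfl⟩
    rwa [(add_natCast_eq_iff (hT k hk)).1 rfl]
  · exact fun h => ⟨_, h, add_natCast_val_sub a x⟩

lemma card_offsetSet [NeZero n] (hT : ∀ k ∈ T, k < n) : (offsetSet a T).card = T.card :=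
  card_image_of_injOn fun k hk l hl h => by
    have := (add_natCast_eq_iff (hT k hk)).1 h
    rwa [add_sub_cancel_left, ZMod.val_cast_of_lt (hT l hl), eq_comm] at this

lemma image_val_sub_offsetSet (hT : ∀ k ∈ T, k < n) :
    (offsetSet a T).image (fun x => (x - a).val) = T := by
  ext k
  simp only [offsetSet, image_image, mem_image, Function.comp_def, add_sub_cancel_left]
  constructor
  · rintro ⟨l, hl, rfl⟩
    rwa [ZMod.val_cast_of_lt (hT l hl)]
  · exact fun hk => ⟨k, hk, ZMod.val_cast_of_lt (hT k hk)⟩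

lemma offsetSet_image_val_sub [NeZero n] (S : Finset (ZMod n)) :
    offsetSet a (S.image fun x => (x - a).val) = S := by
  simp [offsetSet, image_image, Function.comp_def]

lemma sub_one_mem_offsetSet_iff [NeZero n] (hT : ∀ k ∈ T, k + 1 < n) {k : ℕ} (hk : k < n) :
    a + (k : ZMod n) - 1 ∈ offsetSet a T ↔ k ≠ 0 ∧ k - 1 ∈ T := by
  rw [mem_offsetSet fun j hj => (hT j hj).trans' (Nat.lt_succ_self j)]
  rcases k with _ | k
  · simp only [Nat.cast_zero, add_zero, val_sub_one_sub_self, ne_eq, not_true_eq_false, false_and,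
      iff_false]
    exact fun h => by have := hT _ h; omega
  · rw [Nat.cast_succ, ← add_assoc, add_sub_cancel_right, add_sub_cancel_left,
      ZMod.val_cast_of_lt (by omega)]
    simp

lemma filter_offsetSet {p : ZMod n → Prop} [DecidablePred p] {q : ℕ → Prop} [DecidablePred q]
    (h : ∀ k ∈ T, p (a + k) ↔ q k) : (offsetSet a T).filter p = offsetSet a (T.filter q) := by
  rw [offsetSet, filter_image, filter_congr h, offsetSet]

end OffsetSet

-- `k = 0` is listed separately because `0 - 1 = 0` in `ℕ`.
def runStarts (T : Finset ℕ) : Finset ℕ := T.filter fun k => k = 0 ∨ k - 1 ∉ T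

lemma cyclicComponents_offsetSet {n : ℕ} [NeZero n] {a : ZMod n} {T : Finset ℕ}
    (hT : ∀ k ∈ T, k + 1 < n) : cyclicComponents n (offsetSet a T) = (runStarts T).card := by
  have hT' : ∀ k ∈ T, k < n := fun k hk => (hT k hk).trans' k.lt_succ_self
  have hne : offsetSet a T ≠ univ := by
    refine fun h => absurd (h ▸ mem_univ (a - 1)) ?_
    simpa using (sub_one_mem_offsetSet_iff (a := a) hT (NeZero.pos n)).not.2 (by simp)
  rw [cyclicComponents, if_neg hne, runStarts,
    filter_offsetSet (q := fun k => k = 0 ∨ k - 1 ∉ T) fun k hk => by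
      rw [sub_one_mem_offsetSet_iff hT (hT' k hk)]; tauto,
    card_offsetSet fun k hk => hT' k (mem_filter.1 hk).1]

section Block

variable {u v : ℕ}

lemma card_block (hu : 3 ≤ u) (huv : u + 2 ≤ v) : ({0, 1, u, v} : Finset ℕ).card = 4 := by
  rw [card_insert_of_notMem (by simp; omega), card_insert_of_notMem (by simp; omega),
    card_pair (by omega)]

lemma runStarts_block (hu : 3 ≤ u) (huv : u + 2 ≤ v) :
    runStarts {0, 1, u, v} = {0, u, v} := by
  ext k
  simp only [runStarts, mem_filter, mem_insert, mem_singleton]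
  omega

lemma filter_sub_one_mem_block (hu : 3 ≤ u) (huv : u + 2 ≤ v) :
    ({0, 1, u, v} : Finset ℕ).filter (fun k => k ≠ 0 ∧ k - 1 ∈ ({0, 1, u, v} : Finset ℕ)) =
      {1} := by
  ext k
  simp only [mem_filter, mem_insert, mem_singleton]
  omega

lemma block_add_one_lt (huv : u + 2 ≤ v) {n : ℕ} (hvn : v + 2 ≤ n) :
    ∀ k ∈ ({0, 1, u, v} : Finset ℕ), k + 1 < n := by
  simp only [mem_insert, mem_singleton]
  omega

lemma block_lt (huv : u + 2 ≤ v) {n : ℕ} (hvn : v + 2 ≤ n) :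
    ∀ k ∈ ({0, 1, u, v} : Finset ℕ), k < n := by
  simp only [mem_insert, mem_singleton]
  omega

lemma block_injective {u' v' : ℕ} (hu : 3 ≤ u) (huv : u + 2 ≤ v) (hu' : 3 ≤ u')
    (huv' : u' + 2 ≤ v') (h : ({0, 1, u, v} : Finset ℕ) = {0, 1, u', v'}) : u = u' ∧ v = v' := by
  have hu_mem : u ∈ ({0, 1, u', v'} : Finset ℕ) := h ▸ by simp
  have hv_mem : v ∈ ({0, 1, u', v'} : Finset ℕ) := h ▸ by simp
  have hu'_mem : u' ∈ ({0, 1, u, v} : Finset ℕ) := h ▸ by simp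
  have hv'_mem : v' ∈ ({0, 1, u, v} : Finset ℕ) := h ▸ by simp
  simp only [mem_insert, mem_singleton] at hu_mem hv_mem hu'_mem hv'_mem
  omega

lemma exists_eq_block {T : Finset ℕ} (hcard : T.card = 4) (h0 : 0 ∈ T) (h1 : 1 ∈ T)
    (hstarts : (runStarts T).card = 3) : ∃ u v, 3 ≤ u ∧ u + 2 ≤ v ∧ T = {0, 1, u, v} := by
  have hsub : runStarts T ⊆ T.erase 1 := fun k hk => by
    obtain ⟨hkT, hk⟩ := mem_filter.1 hk
    exact mem_erase.2 ⟨by rintro rfl; simp [h0] at hk, hkT⟩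
  have hstarts_eq : runStarts T = T.erase 1 :=
    eq_of_subset_of_card_le hsub (by rw [card_erase_of_mem h1, hcard, hstarts])
  have hstart : ∀ k ∈ T, k ≠ 1 → k = 0 ∨ k - 1 ∉ T := fun k hk hk1 =>
    (mem_filter.1 (show k ∈ runStarts T from hstarts_eq ▸ mem_erase.2 ⟨hk1, hk⟩)).2
  have h1' : 1 ∈ T.erase 0 := mem_erase.2 ⟨one_ne_zero, h1⟩
  obtain ⟨x, y, hxy, hrest⟩ := card_eq_two.1 (show ((T.erase 0).erase 1).card = 2 by
    rw [card_erase_of_mem h1', card_erase_of_mem h0, hcard])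
  have hT : T = {0, 1, x, y} := by rw [← insert_erase h0, ← insert_erase h1', hrest]
  have hx : x ∈ (T.erase 0).erase 1 := hrest ▸ by simp
  have hy : y ∈ (T.erase 0).erase 1 := hrest ▸ by simp
  simp only [mem_erase] at hx hy
  have hx' := hstart x hx.2.2 hx.1
  have hy' := hstart y hy.2.2 hy.1
  rw [hT] at hx' hy'
  simp only [mem_insert, mem_singleton, not_or] at hx' hy'
  rcases lt_or_gt_of_ne hxy with h | h
  · exact ⟨x, y, by omega, by omega, hT⟩
  · exact ⟨y, x, by omega, by omega, hT.trans (by rw [pair_comm x y])⟩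

end Block

section BlockSet

variable {n : ℕ} [NeZero n] {u v : ℕ}

lemma card_offsetSet_block {a : ZMod n} (hu : 3 ≤ u) (huv : u + 2 ≤ v) (hvn : v + 2 ≤ n) :
    (offsetSet a {0, 1, u, v}).card = 4 := by
  rw [card_offsetSet (block_lt huv hvn), card_block hu huv]

lemma cyclicComponents_offsetSet_block {a : ZMod n} (hu : 3 ≤ u) (huv : u + 2 ≤ v)
    (hvn : v + 2 ≤ n) : cyclicComponents n (offsetSet a {0, 1, u, v}) = 3 := by
  rw [cyclicComponents_offsetSet (block_add_one_lt huv hvn), runStarts_block hu huv,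
    card_insert_of_notMem (by simp; omega), card_pair (by omega)]

lemma filter_sub_one_mem_offsetSet_block {a : ZMod n} (hu : 3 ≤ u) (huv : u + 2 ≤ v)
    (hvn : v + 2 ≤ n) :
    (offsetSet a {0, 1, u, v}).filter (fun x => x - 1 ∈ offsetSet a {0, 1, u, v}) = {a + 1} := by
  rw [filter_offsetSet fun k hk =>
      sub_one_mem_offsetSet_iff (block_add_one_lt huv hvn) (block_lt huv hvn k hk),
    filter_sub_one_mem_block hu huv]
  simp [offsetSet]

end BlockSet

lemma exists_sub_one_notMem_add_one_mem {R : Type*} [AddGroupWithOne R] [NeZero (1 : R)]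
    [DecidableEq R] {S : Finset R} (h : (S.filter fun x => x - 1 ∈ S).card = 1) :
    ∃ a ∈ S, a - 1 ∉ S ∧ a + 1 ∈ S := by
  obtain ⟨b, hb⟩ := card_eq_one.1 h
  have hbS : b ∈ S ∧ b - 1 ∈ S := mem_filter.1 (hb ▸ mem_singleton_self b)
  refine ⟨b - 1, hbS.2, fun hb1 => ?_, by rw [sub_add_cancel]; exact hbS.1⟩
  have : b - 1 = b := mem_singleton.1 (hb ▸ mem_filter.2 ⟨hbS.2, hb1⟩)
  exact one_ne_zero (sub_eq_self.1 this)

lemma exists_eq_offsetSet_block {n : ℕ} [NeZero n] {S : Finset (ZMod n)} (hcard : S.card = 4)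
    (hcomp : cyclicComponents n S = 3) :
    ∃ a u v, 3 ≤ u ∧ u + 2 ≤ v ∧ v + 2 ≤ n ∧ S = offsetSet a {0, 1, u, v} := by
  have : Fact (1 < n) := ⟨by have := card_le_univ S; rw [ZMod.card] at this; omega⟩
  have hne : S ≠ univ := by rintro rfl; simp [cyclicComponents] at hcomp
  rw [cyclicComponents, if_neg hne] at hcomp
  obtain ⟨a, haS, ha_start, ha_succ⟩ := exists_sub_one_notMem_add_one_mem (S := S) (by
    have := card_filter_add_card_filter_not (s := S) (fun x => x - 1 ∈ S)
    omega)
  set T := S.image fun x => (x - a).val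
  have hST : S = offsetSet a T := (offsetSet_image_val_sub S).symm
  have hT_lt : ∀ k ∈ T, k < n := by simp [T, ZMod.val_lt]
  have hT : ∀ k ∈ T, k + 1 < n := by
    have hlast : n - 1 ∉ T := by
      rwa [hST, mem_offsetSet hT_lt, val_sub_one_sub_self] at ha_start
    intro k hk
    have := hT_lt k hk
    have : k ≠ n - 1 := by rintro rfl; exact hlast hk
    omega
  have h0 : 0 ∈ T := mem_image.2 ⟨a, haS, by simp⟩
  have h1 : 1 ∈ T := mem_image.2 ⟨a + 1, ha_succ, by simp [ZMod.val_one]⟩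
  obtain ⟨u, v, hu, huv, hT_eq⟩ := exists_eq_block (by rw [← card_offsetSet hT_lt, ← hST, hcard])
    h0 h1 (by rw [← cyclicComponents_offsetSet hT, ← hST, cyclicComponents, if_neg hne, hcomp])
  exact ⟨a, u, v, hu, huv, hT v (by simp [hT_eq]), hT_eq ▸ hST⟩

-- Pairs are stored as `⟨v, u⟩`, larger offset first, so that the range of `u` can depend on `v`.
def offsetPairs (n : ℕ) : Finset (Σ _ : ℕ, ℕ) := (Ico 5 (n - 1)).sigma fun v => Ico 3 (v - 1)

lemma mem_offsetPairs {n u v : ℕ} : ⟨v, u⟩ ∈ offsetPairs n ↔ 3 ≤ u ∧ u + 2 ≤ v ∧ v + 2 ≤ n := by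
  simp only [offsetPairs, mem_sigma, mem_Ico]
  omega

lemma card_offsetPairs_mul_two (n : ℕ) : (offsetPairs n).card * 2 = (n - 5) * (n - 6) := by
  induction n with
  | zero => simp [offsetPairs]
  | succ n ih =>
    rcases Nat.lt_or_ge n 6 with hn | hn
    · have : offsetPairs (n + 1) = ∅ := by
        ext ⟨v, u⟩
        simp only [mem_offsetPairs, Finset.notMem_empty, iff_false]
        omega
      rw [this, show n + 1 - 6 = 0 by omega]
      simp
    · rw [offsetPairs, card_sigma, show n + 1 - 1 = n - 1 + 1 by omega,
        sum_Ico_succ_top (by omega), ← card_sigma, add_mul, ← offsetPairs, ih, Nat.card_Ico]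
      obtain ⟨m, rfl⟩ := Nat.exists_eq_add_of_le hn
      rw [show 6 + m - 5 = m + 1 by omega, show 6 + m - 6 = m by omega,
        show 6 + m - 1 - 1 - 3 = m + 1 by omega, show 6 + m + 1 - 5 = m + 2 by omega,
        show 6 + m + 1 - 6 = m + 1 by omega]
      ring

section Count

variable {n : ℕ} [NeZero n]

lemma filter_cyclicComponents_eq_three_eq_image :
    (univ.filter fun S : Finset (ZMod n) => S.card = 4 ∧ cyclicComponents n S = 3) =
      (univ ×ˢ offsetPairs n).image fun p => offsetSet p.1 {0, 1, p.2.2, p.2.1} := by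
  ext S
  simp only [mem_filter, mem_univ, true_and, mem_image, mem_product, Prod.exists, Sigma.exists,
    mem_offsetPairs]
  constructor
  · rintro ⟨hcard, hcomp⟩
    obtain ⟨a, u, v, hu, huv, hvn, rfl⟩ := exists_eq_offsetSet_block hcard hcomp
    exact ⟨a, v, u, ⟨hu, huv, hvn⟩, rfl⟩
  · rintro ⟨a, v, u, ⟨hu, huv, hvn⟩, rfl⟩
    exact ⟨card_offsetSet_block hu huv hvn, cyclicComponents_offsetSet_block hu huv hvn⟩

lemma injOn_offsetSet_block :
    Set.InjOn (fun p : ZMod n × Σ _ : ℕ, ℕ => offsetSet p.1 {0, 1, p.2.2, p.2.1})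
      ↑(univ ×ˢ offsetPairs n : Finset (ZMod n × Σ _ : ℕ, ℕ)) := by
  rintro ⟨a, v, u⟩ hp ⟨a', v', u'⟩ hp' h
  simp only [coe_product, coe_univ, Set.mem_prod, Set.mem_univ, true_and, mem_coe,
    mem_offsetPairs] at hp hp' h
  obtain ⟨hu, huv, hvn⟩ := hp
  obtain ⟨hu', huv', hvn'⟩ := hp'
  have ha : a = a' := by
    have := filter_sub_one_mem_offsetSet_block (a := a) hu huv hvn
    rw [h, filter_sub_one_mem_offsetSet_block hu' huv' hvn', singleton_inj] at this
    exact (add_right_cancel this).symm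
  subst ha
  have hT := congrArg (Finset.image fun x => (x - a).val) h
  rw [image_val_sub_offsetSet (block_lt huv hvn), image_val_sub_offsetSet (block_lt huv' hvn')]
    at hT
  obtain ⟨rfl, rfl⟩ := block_injective hu huv hu' huv' hT
  rfl

end Count

theorem count_components_three_general (n : ℕ) [NeZero n] :
    (Finset.univ.filter fun S : Finset (ZMod n) =>
      S.card = 4 ∧ cyclicComponents n S = 3).card = n * (n - 5) * (n - 6) / 2 := by
  rw [filter_cyclicComponents_eq_three_eq_image, card_image_of_injOn injOn_offsetSet_block,
    card_product, card_univ, ZMod.card, mul_assoc, ← card_offsetPairs_mul_two, ← mul_assoc,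
    Nat.mul_div_cancel _ two_pos]

/-- For `n ≥ 7`, the number of 4-element subsets of `ZMod n` with exactly three cyclic
components is `n * (n - 5) * (n - 6) / 2`. -/
theorem count_components_three (n : ℕ) [NeZero n] (hn : 7 ≤ n) :
    (Finset.univ.filter fun S : Finset (ZMod n) =>
      S.card = 4 ∧ cyclicComponents n S = 3).card = n * (n - 5) * (n - 6) / 2 :=
  count_components_three_general n
end

section
/- Let e₁, e₂ be two segments contained in a plane P in ℝ³, and let e₃, e₄ be segments each intersecting P in exactly one point, with e₃ ∩ e₄ = ∅. Then there is at most one line l ⊂ ℝ³ that meets e₁ and e₂ in distinct points and also meets both e₃ and e₄. -/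
/-- A subset of `ℝ³` is a line if it is of the form `{a + t • d : t ∈ ℝ}` with `d ≠ 0`. -/
def IsLine (L : Set (EuclideanSpace ℝ (Fin 3))) : Prop :=
  ∃ a d : EuclideanSpace ℝ (Fin 3), d ≠ 0 ∧ L = {p | ∃ t : ℝ, p = a + t • d}

lemma line_eq_of_mem {l : Set (EuclideanSpace ℝ (Fin 3))} {x y : EuclideanSpace ℝ (Fin 3)}
    (hl : IsLine l) (hx : x ∈ l) (hy : y ∈ l) (hxy : x ≠ y) :
    l = {p | ∃ t : ℝ, p = x + t • (y - x)} := by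
  obtain ⟨a, d, hd, rfl⟩ := hl
  obtain ⟨s, rfl⟩ := hx
  obtain ⟨u, rfl⟩ := hy
  have hsu : u - s ≠ 0 := by
    intro h
    apply hxy
    have : u = s := by linarith [sub_eq_zero.mp h]
    rw [this]
  have hyx : (a + u • d) - (a + s • d) = (u - s) • d := by
    rw [sub_smul]; abel
  ext p
  constructor
  · rintro ⟨t, rfl⟩
    refine ⟨(t - s) / (u - s), ?_⟩
    rw [hyx, smul_smul, div_mul_cancel₀ _ hsu, sub_smul]
    abel
  · rintro ⟨r, rfl⟩
    refine ⟨s + r * (u - s), ?_⟩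
    rw [hyx, smul_smul, add_smul]
    abel

lemma line_subset_plane {P : AffineSubspace ℝ (EuclideanSpace ℝ (Fin 3))}
    {l : Set (EuclideanSpace ℝ (Fin 3))} {x y : EuclideanSpace ℝ (Fin 3)}
    (hl : IsLine l) (hx : x ∈ l) (hy : y ∈ l) (hxy : x ≠ y)
    (hxP : x ∈ P) (hyP : y ∈ P) : l ⊆ (P : Set (EuclideanSpace ℝ (Fin 3))) := by
  rw [line_eq_of_mem hl hx hy hxy]
  rintro p ⟨t, rfl⟩
  have hdir : y - x ∈ P.direction := AffineSubspace.vsub_mem_direction hyP hxP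
  have h2 : t • (y - x) ∈ P.direction := P.direction.smul_mem t hdir
  have := AffineSubspace.vadd_mem_of_mem_direction h2 hxP
  simpa [add_comm] using this

/-- Let `e₁ = [a₁,b₁]` and `e₂ = [a₂,b₂]` be segments contained in a plane `P` in `ℝ³`,
and let `e₃ = [a₃,b₃]`, `e₄ = [a₄,b₄]` be disjoint segments each meeting `P` in exactly
one point. Then there is at most one line that meets `e₁` and `e₂` in two distinct
points and also meets both `e₃` and `e₄`. -/
theorem at_most_one_line_coplanar_case
    (P : AffineSubspace ℝ (EuclideanSpace ℝ (Fin 3)))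
    (hP : Module.finrank ℝ P.direction = 2)
    (a₁ b₁ a₂ b₂ a₃ b₃ a₄ b₄ p₃ p₄ : EuclideanSpace ℝ (Fin 3))
    (h₁ : a₁ ≠ b₁) (h₂ : a₂ ≠ b₂) (h₃ : a₃ ≠ b₃) (h₄ : a₄ ≠ b₄)
    (he₁ : segment ℝ a₁ b₁ ⊆ (P : Set (EuclideanSpace ℝ (Fin 3))))
    (he₂ : segment ℝ a₂ b₂ ⊆ (P : Set (EuclideanSpace ℝ (Fin 3))))
    (he₃ : (P : Set (EuclideanSpace ℝ (Fin 3))) ∩ segment ℝ a₃ b₃ = {p₃})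
    (he₄ : (P : Set (EuclideanSpace ℝ (Fin 3))) ∩ segment ℝ a₄ b₄ = {p₄})
    (hdisj : segment ℝ a₃ b₃ ∩ segment ℝ a₄ b₄ = ∅) :
    {l : Set (EuclideanSpace ℝ (Fin 3)) | IsLine l ∧
        (∃ x ∈ l ∩ segment ℝ a₁ b₁, ∃ y ∈ l ∩ segment ℝ a₂ b₂, x ≠ y) ∧
        (l ∩ segment ℝ a₃ b₃).Nonempty ∧
        (l ∩ segment ℝ a₄ b₄).Nonempty}.encard ≤ 1 := by
  have hp₃ : p₃ ∈ (P : Set (EuclideanSpace ℝ (Fin 3))) ∩ segment ℝ a₃ b₃ := by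
    rw [he₃]; rfl
  have hp₄ : p₄ ∈ (P : Set (EuclideanSpace ℝ (Fin 3))) ∩ segment ℝ a₄ b₄ := by
    rw [he₄]; rfl
  have hne : p₃ ≠ p₄ := by
    intro h
    have : p₃ ∈ segment ℝ a₃ b₃ ∩ segment ℝ a₄ b₄ := ⟨hp₃.2, h ▸ hp₄.2⟩
    rw [hdisj] at this
    exact this
  -- key: every line in the set contains p₃ and p₄
  have key : ∀ l ∈ {l : Set (EuclideanSpace ℝ (Fin 3)) | IsLine l ∧
        (∃ x ∈ l ∩ segment ℝ a₁ b₁, ∃ y ∈ l ∩ segment ℝ a₂ b₂, x ≠ y) ∧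
        (l ∩ segment ℝ a₃ b₃).Nonempty ∧
        (l ∩ segment ℝ a₄ b₄).Nonempty},
      l = {p | ∃ t : ℝ, p = p₃ + t • (p₄ - p₃)} := by
    rintro l ⟨hl, ⟨x, ⟨hxl, hx1⟩, y, ⟨hyl, hy2⟩, hxy⟩, ⟨z, hzl, hz3⟩, ⟨w, hwl, hw4⟩⟩
    have hsub : l ⊆ (P : Set (EuclideanSpace ℝ (Fin 3))) :=
      line_subset_plane hl hxl hyl hxy (he₁ hx1) (he₂ hy2)
    have hz : z = p₃ := by
      have : z ∈ ({p₃} : Set _) := he₃ ▸ ⟨hsub hzl, hz3⟩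
      exact this
    have hw : w = p₄ := by
      have : w ∈ ({p₄} : Set _) := he₄ ▸ ⟨hsub hwl, hw4⟩
      exact this
    exact line_eq_of_mem hl (hz ▸ hzl) (hw ▸ hwl) hne
  rw [Set.encard_le_one_iff]
  intro l₁ l₂ h1 h2
  rw [key l₁ h1, key l₂ h2]
end

section
/- Suppose for each 4-element subset S of Z/nZ we have a finite set Q(S) of 'quadrisecants' satisfying: |Q(S)| = 0 if S has 1 component or 2 components one of which is a singleton; |Q(S)| ≤ 1 if S has two components each of size 2, or 3 components; |Q(S)| ≤ 2 if S has 4 components. If every quadrisecant of the knot belongs to Q(S) for some S, and the Q(S) are pairwise disjoint, then the total number of quadrisecants is at most S₂,₂(n) + S₃(n) + 2·S₄(n) = n(n-3)(n-4)(n-5)/12 for n ≥ 3. -/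
/-!
Rooting a 4-subset of `ZMod n` at one of its points `x`, write it as `{x, x + a, x + b, x + c}`
with `0 < a < b < c < n`; its four cyclic gaps are empty exactly when `a = 1`, `b = a + 1`,
`c = b + 1` and `c + 1 = n` respectively. Going through the cases, the number of quadrisecants
allowed for the set equals the number of pairs of opposite gaps that are both nonempty
(`oppositeGapPairs`). Summing over the `4` possible roots of each set,
`4 · ∑_S quadrisecantBound S ≤ n · ∑_{0<a<b<c<n} oppositeGapPairs`, and each pair of opposite gaps is
nonempty for at most `C(n-3, 3)` triples: shift `(a, b, c)` to `(a-2, b-2, c-3)`, resp.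
`(a-1, b-2, c-2)`, an increasing triple below `n - 3`. Finally `6n · C(n-3, 3) =
n(n-3)(n-4)(n-5)`.
-/

open Finset

section StrictTriples
variable {α : Type*} [LinearOrder α]

theorem Finset.exists_lt_lt_of_card_eq_three {s : Finset α} (h : s.card = 3) :
    ∃ a b c, a < b ∧ b < c ∧ s = {a, b, c} := by
  refine ⟨s.orderEmbOfFin h 0, s.orderEmbOfFin h 1, s.orderEmbOfFin h 2, by simp, by simp, ?_⟩
  conv_lhs => rw [← s.image_orderEmbOfFin_univ h]
  simp [Fin.univ_succ, image_insert]

theorem eq_of_sorted_triple_eq {a b c a' b' c' : α} (hab : a < b) (hbc : b < c)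
    (hab' : a' < b') (hbc' : b' < c') (h : ({a, b, c} : Finset α) = {a', b', c'}) :
    a = a' ∧ b = b' ∧ c = c' := by
  have h1 := Finset.ext_iff.1 h
  simp only [mem_insert, mem_singleton] at h1
  have := h1 a; have := h1 b; have := h1 c; have := h1 a'; have := h1 b'; have := h1 c'
  simp only [true_or, or_true, true_iff, iff_true] at *
  grind

def strictTriples (s : Finset α) : Finset (α × α × α) :=
  (s ×ˢ s ×ˢ s).filter fun t => t.1 < t.2.1 ∧ t.2.1 < t.2.2

theorem mem_strictTriples {s : Finset α} {a b c : α} :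
    (a, b, c) ∈ strictTriples s ↔ (a ∈ s ∧ b ∈ s ∧ c ∈ s) ∧ a < b ∧ b < c := by
  simp [strictTriples]

theorem card_strictTriples (s : Finset α) : (strictTriples s).card = s.card.choose 3 := by
  rw [← card_powersetCard]
  refine card_nbij (fun t => {t.1, t.2.1, t.2.2}) ?_ ?_ ?_
  · rintro ⟨a, b, c⟩ ht
    rw [mem_coe, mem_strictTriples] at ht
    rw [mem_coe, mem_powersetCard, card_eq_three]
    refine ⟨?_, a, b, c, ht.2.1.ne, (ht.2.1.trans ht.2.2).ne, ht.2.2.ne, rfl⟩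
    simp [insert_subset_iff, ht.1]
  · rintro ⟨a, b, c⟩ ht ⟨a', b', c'⟩ ht' h
    rw [mem_coe, mem_strictTriples] at ht ht'
    obtain ⟨rfl, rfl, rfl⟩ := eq_of_sorted_triple_eq ht.2.1 ht.2.2 ht'.2.1 ht'.2.2 h
    rfl
  · intro K hK
    rw [mem_coe, mem_powersetCard] at hK
    obtain ⟨a, b, c, hab, hbc, rfl⟩ := exists_lt_lt_of_card_eq_three hK.2
    refine ⟨(a, b, c), ?_, rfl⟩
    rw [mem_coe, mem_strictTriples]
    simpa [insert_subset_iff, hab, hbc] using hK.1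

end StrictTriples

namespace ZMod
variable {n : ℕ}

theorem natCast_inj_of_lt {a b : ℕ} (ha : a < n) (hb : b < n) :
    (a : ZMod n) = b ↔ a = b := by
  rw [natCast_eq_natCast_iff', Nat.mod_eq_of_lt ha, Nat.mod_eq_of_lt hb]

theorem natCast_eq_zero_iff_of_lt {a : ℕ} (ha : a < n) : (a : ZMod n) = 0 ↔ a = 0 := by
  rw [natCast_eq_zero_iff]
  exact ⟨fun h => Nat.eq_zero_of_dvd_of_lt h ha, by rintro rfl; exact dvd_zero n⟩

end ZMod

section CyclicComponents
variable {n : ℕ} [NeZero n] {S : Finset (ZMod n)}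

theorem exists_sub_one_notMem (hS : S.Nonempty) (hSu : S ≠ univ) : ∃ i ∈ S, i - 1 ∉ S := by
  by_contra! h
  obtain ⟨x, hx⟩ := hS
  have hsub : ∀ k : ℕ, x - k ∈ S := by
    intro k
    induction k with
    | zero => simpa using hx
    | succ k ih => simpa [sub_add_eq_sub_sub] using h _ ih
  exact hSu (eq_univ_of_forall fun y => by simpa using hsub (x - y).val)

theorem cyclicComponents_pos (hS : S.Nonempty) : 0 < cyclicComponents n S := by
  rw [cyclicComponents]
  split_ifs with hSu
  · exact one_pos
  · obtain ⟨i, hi, hi'⟩ := exists_sub_one_notMem hS hSu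
    exact card_pos.2 ⟨i, mem_filter.2 ⟨hi, hi'⟩⟩

theorem cyclicComponents_le_card (hS : S.Nonempty) : cyclicComponents n S ≤ S.card := by
  rw [cyclicComponents]
  split_ifs
  · exact hS.card_pos
  · exact card_filter_le _ _

theorem cyclicComponents_of_card_eq_four (hS : S.card = 4) :
    cyclicComponents n S = 1 ∨ cyclicComponents n S = 2 ∨ cyclicComponents n S = 3 ∨
      cyclicComponents n S = 4 := by
  have hne : S.Nonempty := card_pos.1 (by omega)
  have := cyclicComponents_pos hne
  have := cyclicComponents_le_card hne
  omega

end CyclicComponents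

def quadruple {n : ℕ} (x : ZMod n) (a b c : ℕ) : Finset (ZMod n) := {x, x + a, x + b, x + c}

section Quadruple
variable {n : ℕ} {x : ZMod n} {a b c : ℕ}

theorem add_natCast_mem_quadruple {m : ℕ} (hm : m < n) (ha : a < n) (hb : b < n) (hc : c < n) :
    x + (m : ZMod n) ∈ quadruple x a b c ↔ m = 0 ∨ m = a ∨ m = b ∨ m = c := by
  simp [quadruple, ZMod.natCast_inj_of_lt hm, ZMod.natCast_eq_zero_iff_of_lt hm, *]

theorem forall_mem_quadruple {p : ZMod n → Prop} :
    (∀ i ∈ quadruple x a b c, p i) ↔ p x ∧ p (x + a) ∧ p (x + b) ∧ p (x + c) := by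
  simp [quadruple]

variable (h0a : 0 < a) (hab : a < b) (hbc : b < c) (hcn : c < n)
include h0a hab hbc hcn

theorem sum_quadruple {M : Type*} [AddCommMonoid M] (f : ZMod n → M) :
    ∑ i ∈ quadruple x a b c, f i = f x + f (x + a) + f (x + b) + f (x + c) := by
  have ha : a < n := by omega
  have hb : b < n := by omega
  rw [quadruple, sum_insert, sum_insert, sum_pair, add_assoc, add_assoc]
  · simpa [ZMod.natCast_inj_of_lt hb hcn] using hbc.ne
  · simp [ZMod.natCast_inj_of_lt ha hb, ZMod.natCast_inj_of_lt ha hcn, hab.ne,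
      (hab.trans hbc).ne]
  · simp [ZMod.natCast_eq_zero_iff_of_lt, ha, hb, hcn, h0a.ne', (h0a.trans hab).ne',
      (h0a.trans (hab.trans hbc)).ne']

theorem card_quadruple : (quadruple x a b c).card = 4 := by
  simp [card_eq_sum_ones, sum_quadruple h0a hab hbc hcn]

theorem sub_one_mem_quadruple_iff :
    (x - 1 ∈ quadruple x a b c ↔ c + 1 = n) ∧ (x + a - 1 ∈ quadruple x a b c ↔ a = 1) ∧
    (x + b - 1 ∈ quadruple x a b c ↔ b = a + 1) ∧
    (x + c - 1 ∈ quadruple x a b c ↔ c = b + 1) := by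
  have mem := fun m (hm : m < n) =>
    add_natCast_mem_quadruple (x := x) (a := a) (b := b) hm (by omega) (by omega) hcn
  refine ⟨?_, ?_, ?_, ?_⟩
  · rw [sub_eq_add_neg, ← zero_sub, ← ZMod.natCast_self, ← Nat.cast_pred (by omega),
      mem _ (by omega)]
    omega
  all_goals rw [add_sub_assoc, ← Nat.cast_pred (by omega), mem _ (by omega)]; omega

theorem add_one_mem_quadruple_iff :
    (x + 1 ∈ quadruple x a b c ↔ a = 1) ∧ (x + a + 1 ∈ quadruple x a b c ↔ b = a + 1) ∧
    (x + b + 1 ∈ quadruple x a b c ↔ c = b + 1) ∧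
    (x + c + 1 ∈ quadruple x a b c ↔ c + 1 = n) := by
  have mem := fun m (hm : m < n) =>
    add_natCast_mem_quadruple (x := x) (a := a) (b := b) hm (by omega) (by omega) hcn
  refine ⟨?_, ?_, ?_, ?_⟩
  · rw [← Nat.cast_one, mem _ (by omega)]; omega
  · rw [add_assoc, ← Nat.cast_succ, mem _ (by omega)]; omega
  · rw [add_assoc, ← Nat.cast_succ, mem _ (by omega)]; omega
  · rw [add_assoc, ← Nat.cast_succ]
    rcases eq_or_ne (c + 1) n with h | h
    · simp [h, quadruple]
    · rw [mem _ (by omega)]; omega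

theorem cyclicComponents_quadruple [NeZero n] :
    cyclicComponents n (quadruple x a b c) = if n = 4 then 1 else
      (if c + 1 = n then 0 else 1) + (if a = 1 then 0 else 1) + (if b = a + 1 then 0 else 1) +
        (if c = b + 1 then 0 else 1) := by
  obtain ⟨h0, ha, hb, hc⟩ := sub_one_mem_quadruple_iff (x := x) h0a hab hbc hcn
  have hcard := card_quadruple (x := x) h0a hab hbc hcn
  by_cases hn : n = 4
  · rw [cyclicComponents, if_pos (eq_univ_of_card _ (by simp [hcard, hn])), if_pos hn]
  · rw [cyclicComponents, if_neg (fun h => hn (by simpa [h] using hcard)), if_neg hn,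
      card_filter, sum_quadruple h0a hab hbc hcn]
    simp only [h0, ha, hb, hc, ite_not]

theorem noSingleton_quadruple_iff :
    (∀ i ∈ quadruple x a b c, i - 1 ∈ quadruple x a b c ∨ i + 1 ∈ quadruple x a b c) ↔
      (c + 1 = n ∨ a = 1) ∧ (a = 1 ∨ b = a + 1) ∧ (b = a + 1 ∨ c = b + 1) ∧
        (c = b + 1 ∨ c + 1 = n) := by
  obtain ⟨h0, ha, hb, hc⟩ := sub_one_mem_quadruple_iff (x := x) h0a hab hbc hcn
  obtain ⟨h0', ha', hb', hc'⟩ := add_one_mem_quadruple_iff (x := x) h0a hab hbc hcn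
  rw [forall_mem_quadruple, h0, ha, hb, hc, h0', ha', hb', hc']

end Quadruple

section Counting
variable {n : ℕ} [NeZero n]

theorem exists_eq_quadruple {S : Finset (ZMod n)} (hS : S.card = 4) {x : ZMod n} (hx : x ∈ S) :
    ∃ a b c, 0 < a ∧ a < b ∧ b < c ∧ c < n ∧ S = quadruple x a b c := by
  set K := (S.erase x).image fun y => (y - x).val
  have hK : K.card = 3 := by
    rw [card_image_of_injOn, card_erase_of_mem hx, hS]
    intro y _ z _ h
    simpa using ZMod.val_injective n h
  obtain ⟨a, b, c, hab, hbc, hKabc⟩ := exists_lt_lt_of_card_eq_three hK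
  have hmemK : ∀ m ∈ K, 0 < m ∧ m < n := by
    simp only [K, mem_image, mem_erase]
    rintro m ⟨y, ⟨hyx, -⟩, rfl⟩
    exact ⟨ZMod.val_pos.2 (sub_ne_zero.2 hyx), ZMod.val_lt _⟩
  have ha := hmemK a (by simp [hKabc])
  have hc := hmemK c (by simp [hKabc])
  refine ⟨a, b, c, ha.1, hab, hbc, hc.2, ?_⟩
  have hKS : K.image (fun m : ℕ => x + (m : ZMod n)) = S.erase x := by
    simp [K, image_image, Function.comp_def]
  rw [← insert_erase hx, ← hKS, hKabc]
  simp [quadruple, image_insert]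

theorem four_mul_sum_le_sum_quadruple (f : Finset (ZMod n) → ℕ) :
    4 * ∑ S ∈ powersetCard 4 univ, f S ≤
      ∑ x : ZMod n, ∑ t ∈ strictTriples (Ico 1 n), f (quadruple x t.1 t.2.1 t.2.2) := by
  let root : ZMod n × ℕ × ℕ × ℕ → Σ _ : Finset (ZMod n), ZMod n :=
    fun q => ⟨quadruple q.1 q.2.1 q.2.2.1 q.2.2.2, q.1⟩
  have hcover : (powersetCard 4 univ).sigma (fun S => S) ⊆
      (univ ×ˢ strictTriples (Ico 1 n)).image root := by
    rintro ⟨S, x⟩ hSx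
    simp only [mem_sigma, mem_powersetCard] at hSx
    obtain ⟨a, b, c, h0a, hab, hbc, hcn, rfl⟩ := exists_eq_quadruple hSx.1.2 hSx.2
    refine mem_image.2 ⟨(x, a, b, c), ?_, rfl⟩
    simp only [mem_product, mem_univ, mem_strictTriples, mem_Ico, true_and]
    omega
  calc 4 * ∑ S ∈ powersetCard 4 univ, f S
      = ∑ p ∈ (powersetCard 4 univ).sigma (fun S => S), f p.1 := by
        rw [sum_sigma, mul_sum]
        refine sum_congr rfl fun S hS => ?_
        dsimp only
        rw [sum_const, (mem_powersetCard.1 hS).2, smul_eq_mul]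
    _ ≤ ∑ p ∈ (univ ×ˢ strictTriples (Ico 1 n)).image root, f p.1 := sum_le_sum_of_subset hcover
    _ ≤ ∑ q ∈ univ ×ˢ strictTriples (Ico 1 n), f (root q).1 :=
        sum_image_le_of_nonneg fun _ _ => Nat.zero_le _
    _ = _ := sum_product _ _ _

end Counting

def quadrisecantBound (n : ℕ) [NeZero n] (S : Finset (ZMod n)) : ℕ :=
  if cyclicComponents n S = 4 then 2
  else if cyclicComponents n S = 3 ∨
      (cyclicComponents n S = 2 ∧ ∀ i ∈ S, i - 1 ∈ S ∨ i + 1 ∈ S) then 1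
  else 0

def oppositeGapPairs (n a b c : ℕ) : ℕ :=
  (if a ≠ 1 ∧ c ≠ b + 1 then 1 else 0) + (if b ≠ a + 1 ∧ c + 1 ≠ n then 1 else 0)

theorem quadrisecantBound_quadruple {n : ℕ} [NeZero n] {x : ZMod n} {a b c : ℕ}
    (h0a : 0 < a) (hab : a < b) (hbc : b < c) (hcn : c < n) :
    quadrisecantBound n (quadruple x a b c) = oppositeGapPairs n a b c := by
  simp only [quadrisecantBound, cyclicComponents_quadruple h0a hab hbc hcn,
    noSingleton_quadruple_iff h0a hab hbc hcn, oppositeGapPairs]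
  split_ifs <;> omega

theorem sum_oppositeGapPairs_le (n : ℕ) :
    ∑ t ∈ strictTriples (Ico 1 n), oppositeGapPairs n t.1 t.2.1 t.2.2 ≤ 2 * (n - 3).choose 3 := by
  rw [← card_range (n - 3), ← card_strictTriples, two_mul]
  simp only [oppositeGapPairs, sum_add_distrib, sum_boole, Nat.cast_id]
  refine add_le_add
    (card_le_card_of_injOn (fun t => (t.1 - 2, t.2.1 - 2, t.2.2 - 3)) ?_ ?_)
    (card_le_card_of_injOn (fun t => (t.1 - 1, t.2.1 - 2, t.2.2 - 2)) ?_ ?_)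
  all_goals
    simp only [Set.MapsTo, Set.InjOn, mem_coe, mem_filter, Prod.forall, mem_strictTriples,
      mem_Ico, mem_range, Prod.mk.injEq]
    intros
    omega

theorem six_mul_choose_three (m : ℕ) : 6 * m.choose 3 = m * (m - 1) * (m - 2) := by
  rw [show 6 = Nat.factorial 3 from rfl, ← Nat.descFactorial_eq_factorial_mul_choose]
  simp only [Nat.descFactorial_succ, Nat.descFactorial_zero, Nat.sub_zero]
  ring

theorem twelve_mul_sum_quadrisecantBound_le (n : ℕ) [NeZero n] :
    12 * ∑ S ∈ powersetCard 4 univ, quadrisecantBound n S ≤ n * (n - 3) * (n - 4) * (n - 5) := by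
  have hsum : ∀ x : ZMod n, ∑ t ∈ strictTriples (Ico 1 n),
      quadrisecantBound n (quadruple x t.1 t.2.1 t.2.2) =
        ∑ t ∈ strictTriples (Ico 1 n), oppositeGapPairs n t.1 t.2.1 t.2.2 := by
    intro x
    refine sum_congr rfl fun ⟨a, b, c⟩ ht => ?_
    simp only [mem_strictTriples, mem_Ico] at ht
    dsimp only
    exact quadrisecantBound_quadruple (by omega) ht.2.1 ht.2.2 (by omega)
  calc 12 * ∑ S ∈ powersetCard 4 univ, quadrisecantBound n S
      ≤ 3 * (n * ∑ t ∈ strictTriples (Ico 1 n), oppositeGapPairs n t.1 t.2.1 t.2.2) := by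
        have := four_mul_sum_le_sum_quadruple (quadrisecantBound n)
        simp only [hsum, sum_const, card_univ, ZMod.card, smul_eq_mul] at this
        omega
    _ ≤ 3 * (n * (2 * (n - 3).choose 3)) := by gcongr; exact sum_oppositeGapPairs_le n
    _ = n * (6 * (n - 3).choose 3) := by ring
    _ = n * (n - 3) * (n - 4) * (n - 5) := by
        rw [six_mul_choose_three, show n - 3 - 1 = n - 4 by omega, show n - 3 - 2 = n - 5 by omega]
        ring

theorem quadrisecant_count_bound_general {α : Type*} (n : ℕ) [NeZero n]
    (Q : Finset (ZMod n) → Finset α) (T : Finset α)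
    (h1 : ∀ S : Finset (ZMod n), S.card = 4 → cyclicComponents n S = 1 → Q S = ∅)
    (h21 : ∀ S : Finset (ZMod n), S.card = 4 → cyclicComponents n S = 2 →
      (∃ i ∈ S, i - 1 ∉ S ∧ i + 1 ∉ S) → Q S = ∅)
    (h22 : ∀ S : Finset (ZMod n), S.card = 4 → cyclicComponents n S = 2 →
      (∀ i ∈ S, i - 1 ∈ S ∨ i + 1 ∈ S) → (Q S).card ≤ 1)
    (h3 : ∀ S : Finset (ZMod n), S.card = 4 → cyclicComponents n S = 3 → (Q S).card ≤ 1)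
    (h4 : ∀ S : Finset (ZMod n), S.card = 4 → cyclicComponents n S = 4 → (Q S).card ≤ 2)
    (hcover : ∀ q ∈ T, ∃ S : Finset (ZMod n), S.card = 4 ∧ q ∈ Q S) :
    T.card ≤ n * (n - 3) * (n - 4) * (n - 5) / 12 := by
  classical
  have hQ : ∀ S ∈ powersetCard 4 univ, (Q S).card ≤ quadrisecantBound n S := by
    intro S hS
    obtain ⟨-, hS⟩ := mem_powersetCard.1 hS
    rcases cyclicComponents_of_card_eq_four hS with h | h | h | h
    · simp [h1 S hS h]
    · by_cases hs : ∀ i ∈ S, i - 1 ∈ S ∨ i + 1 ∈ S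
      · rw [quadrisecantBound, if_neg (by omega), if_pos (Or.inr ⟨h, hs⟩)]
        exact h22 S hS h hs
      · push Not at hs
        simp [h21 S hS h hs]
    · rw [quadrisecantBound, if_neg (by omega), if_pos (Or.inl h)]
      exact h3 S hS h
    · rw [quadrisecantBound, if_pos h]
      exact h4 S hS h
  have hT : T ⊆ (powersetCard 4 univ).biUnion Q := fun q hq => by
    obtain ⟨S, hS, hqS⟩ := hcover q hq
    exact mem_biUnion.2 ⟨S, mem_powersetCard.2 ⟨subset_univ S, hS⟩, hqS⟩
  rw [Nat.le_div_iff_mul_le (by norm_num), mul_comm]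
  calc 12 * T.card ≤ 12 * ∑ S ∈ powersetCard 4 univ, quadrisecantBound n S := by
        gcongr
        exact (card_le_card hT).trans (card_biUnion_le.trans (sum_le_sum hQ))
    _ ≤ _ := twelve_mul_sum_quadrisecantBound_le n

/-- Abstract counting argument for the Main Theorem. Suppose each 4-element subset `S`
of `ZMod n` carries a finite set `Q S` of quadrisecants with: `Q S = ∅` if `S` has one
component, or two components one of which is a singleton; `|Q S| ≤ 1` if `S` has two
components each of size two, or three components; `|Q S| ≤ 2` if `S` has four
components. If the sets `Q S` are pairwise disjoint and every quadrisecant in `T`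
lies in some `Q S`, then `|T| ≤ n(n-3)(n-4)(n-5)/12`. -/
theorem quadrisecant_count_bound {α : Type*} [DecidableEq α] (n : ℕ) [NeZero n]
    (hn : 3 ≤ n) (Q : Finset (ZMod n) → Finset α) (T : Finset α)
    (h1 : ∀ S : Finset (ZMod n), S.card = 4 → cyclicComponents n S = 1 → Q S = ∅)
    (h21 : ∀ S : Finset (ZMod n), S.card = 4 → cyclicComponents n S = 2 →
      (∃ i ∈ S, i - 1 ∉ S ∧ i + 1 ∉ S) → Q S = ∅)
    (h22 : ∀ S : Finset (ZMod n), S.card = 4 → cyclicComponents n S = 2 →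
      (∀ i ∈ S, i - 1 ∈ S ∨ i + 1 ∈ S) → (Q S).card ≤ 1)
    (h3 : ∀ S : Finset (ZMod n), S.card = 4 → cyclicComponents n S = 3 → (Q S).card ≤ 1)
    (h4 : ∀ S : Finset (ZMod n), S.card = 4 → cyclicComponents n S = 4 → (Q S).card ≤ 2)
    (hdisj : ∀ S S' : Finset (ZMod n), S ≠ S' → Disjoint (Q S) (Q S'))
    (hcover : ∀ q ∈ T, ∃ S : Finset (ZMod n), S.card = 4 ∧ q ∈ Q S) :
    T.card ≤ n * (n - 3) * (n - 4) * (n - 5) / 12 :=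
  quadrisecant_count_bound_general n Q T h1 h21 h22 h3 h4 hcover
end
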